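/- arXiv:1709.05954 — 3 statements merged into one kernel-verified Lean document; each statement's English description precedes it below -/
import Mathlib

section
/- Let v be the vertex sequence of a walk ⟨f | g⟩_m and let R ≥ 1. If f(n + R) ≡ f(n) (mod m) and g(n + R) = g(n) for all n ≥ 1, then v(R·k + i) = k·v(R) + v(i) for all natural numbers k and i; in particular v(R·k + i) − v(R·k) = v(i), so the walk is repetitive with repetition index R and repetition figure v(0), v(1), …, v(R). -/
/-!
After shifting the index by one, the summand of the walk is an `R`-periodic sequence (the
exponential only depends on `f` modulo `m`), and a sum of `R·k + i` consecutive terms of an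
`R`-periodic sequence is `k` full periods plus its first `i` terms.
-/

open Complex Finset

theorem Finset.sum_Icc_one_eq_sum_range {M : Type*} [AddCommMonoid M] (f : ℕ → M) (n : ℕ) :
    ∑ t ∈ Icc 1 n, f t = ∑ t ∈ range n, f (t + 1) := by
  rw [← Ico_add_one_right_eq_Icc, sum_Ico_eq_sum_range, Nat.add_sub_cancel]
  simp only [add_comm]

theorem Function.Periodic.sum_range_mul_add {M : Type*} [AddCommMonoid M] {u : ℕ → M} {R : ℕ}
    (hu : Function.Periodic u R) (k i : ℕ) :
    ∑ t ∈ range (R * k + i), u t = k • ∑ t ∈ range R, u t + ∑ t ∈ range i, u t := by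
  induction k with
  | zero => simp
  | succ k ih =>
    rw [show R * (k + 1) + i = R + (R * k + i) by ring, sum_range_add, succ_nsmul', add_assoc,
      ← ih]
    exact congrArg _ (sum_congr rfl fun x _ => by rw [add_comm, hu])

theorem Complex.exp_two_pi_I_mul_natCast_div_eq_of_mod_eq {a b m : ℕ} (h : a % m = b % m) :
    exp (2 * Real.pi * I * a / m) = exp (2 * Real.pi * I * b / m) := by
  rcases Nat.eq_zero_or_pos m with rfl | hm
  · simp_all
  obtain ⟨c, hc⟩ := (Nat.ModEq.dvd h : (m : ℤ) ∣ b - a)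
  rw [exp_eq_exp_iff_exists_int]
  refine ⟨-c, ?_⟩
  have hc' : (b : ℂ) = a + m * c := by exact_mod_cast (by linarith : (b : ℤ) = a + m * c)
  have hm' : (m : ℂ) ≠ 0 := by exact_mod_cast hm.ne'
  rw [hc']
  field_simp
  push_cast
  ring

theorem stmt_3_general (f : ℕ → ℕ) (g : ℕ → ℝ) (m : ℕ) (v : ℕ → ℂ)
    (hv : ∀ n, v n = ∑ t ∈ Finset.Icc 1 n,
      (g t : ℂ) * Complex.exp (2 * (Real.pi : ℂ) * Complex.I * (f t : ℂ) / (m : ℂ)))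
    (R : ℕ)
    (hf : ∀ n, 1 ≤ n → f (n + R) % m = f n % m)
    (hg : ∀ n, 1 ≤ n → g (n + R) = g n) :
    ∀ k i : ℕ, v (R * k + i) = (k : ℂ) * v R + v i := by
  set u : ℕ → ℂ := fun t =>
    (g (t + 1) : ℂ) * exp (2 * (Real.pi : ℂ) * I * (f (t + 1) : ℂ) / (m : ℂ))
  have hvu : ∀ n, v n = ∑ t ∈ range n, u t :=
    fun n => (hv n).trans (sum_Icc_one_eq_sum_range _ n)
  have hu : Function.Periodic u R := fun t => by
    simp only [u, show t + R + 1 = t + 1 + R by omega, hg _ (Nat.le_add_left 1 t),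
      exp_two_pi_I_mul_natCast_div_eq_of_mod_eq (hf _ (Nat.le_add_left 1 t))]
  intro k i
  simp only [hvu, hu.sum_range_mul_add, nsmul_eq_mul]

/-- If `f` is `R`-periodic modulo `m` and `g` is `R`-periodic (for `n ≥ 1`), then the
walk `⟨f | g⟩_m` satisfies `v(Rk + i) = k·v(R) + v(i)` for all `k, i`; in particular
it is repetitive with repetition index `R` and repetition figure `v(0), …, v(R)`. -/
theorem stmt_3 (f : ℕ → ℕ) (g : ℕ → ℝ) (m : ℕ) (hm : 1 ≤ m) (v : ℕ → ℂ)
    (hv : ∀ n, v n = ∑ t ∈ Finset.Icc 1 n,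
      (g t : ℂ) * Complex.exp (2 * (Real.pi : ℂ) * Complex.I * (f t : ℂ) / (m : ℂ)))
    (R : ℕ) (hR : 1 ≤ R)
    (hf : ∀ n, 1 ≤ n → f (n + R) % m = f n % m)
    (hg : ∀ n, 1 ≤ n → g (n + R) = g n) :
    ∀ k i : ℕ, v (R * k + i) = (k : ℂ) * v R + v i :=
  stmt_3_general f g m v hv R hf hg
end

section
/- Let f : ℕ → ℕ satisfy f(n + m) ≡ f(n) (mod m) for all n ≥ 1, and let v be the vertex sequence of the walk ⟨f⟩_m (unit edge lengths, g ≡ 1). Then the walk is bounded if and only if ∑_{t=1}^{m} exp(2·π·I·f(t)/m) = 0, and in that case it is closed, i.e. v(n + m) = v(n) for all n. -/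
open Complex Finset

/-!
Because `f (t + m) ≡ f t [MOD m]` for `t ≥ 1`, the steps `exp (2πi f(t)/m)` are `m`-periodic,
so `v (n + m) = v n + v m`. If `v m ≠ 0`, then `v (k * m) = k • v m` grows linearly; if
`v m = 0`, then `v` is `m`-periodic and takes only the finitely many values `v 0, …, v (m - 1)`.
-/

theorem periodic_exp_two_pi_mul_I_mul_natCast_div (m : ℕ) :
    Function.Periodic
      (fun a : ℕ => exp (2 * (Real.pi : ℂ) * I * (a : ℂ) / (m : ℂ))) m := by
  intro a
  rcases eq_or_ne m 0 with rfl | hm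
  · simp
  · have hm' : (m : ℂ) ≠ 0 := Nat.cast_ne_zero.mpr hm
    simp only [Nat.cast_add, mul_add, add_div, mul_div_cancel_right₀ _ hm', exp_periodic _]

theorem exp_two_pi_mul_I_mul_natCast_div_eq_of_mod_eq {a b m : ℕ} (h : a % m = b % m) :
    exp (2 * (Real.pi : ℂ) * I * (a : ℂ) / (m : ℂ)) =
      exp (2 * (Real.pi : ℂ) * I * (b : ℂ) / (m : ℂ)) := by
  have hper := periodic_exp_two_pi_mul_I_mul_natCast_div m
  rw [← hper.map_mod_nat a, ← hper.map_mod_nat b, h]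

theorem sum_Icc_one_add_period {M : Type*} [AddCommMonoid M] {g : ℕ → M} {m : ℕ}
    (hg : ∀ t, 1 ≤ t → g (t + m) = g t) (n : ℕ) :
    ∑ t ∈ Icc 1 (n + m), g t = ∑ t ∈ Icc 1 n, g t + ∑ t ∈ Icc 1 m, g t := by
  induction n with
  | zero => simp
  | succ n ih =>
    rw [Nat.add_right_comm, sum_Icc_succ_top (by omega), ih, sum_Icc_succ_top (by omega),
      Nat.add_right_comm, hg (n + 1) (by omega), add_right_comm]

theorem Function.Periodic.exists_forall_norm_le {E : Type*} [SeminormedAddCommGroup E]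
    {v : ℕ → E} {m : ℕ} (hv : Function.Periodic v m) (hm : m ≠ 0) :
    ∃ B : ℝ, ∀ n, ‖v n‖ ≤ B := by
  refine ⟨∑ r ∈ range m, ‖v r‖, fun n => ?_⟩
  rw [← hv.map_mod_nat n]
  exact single_le_sum (fun r _ => norm_nonneg (v r)) (mem_range.mpr (Nat.mod_lt n (by omega)))

theorem map_add_mul_of_map_add {M : Type*} [AddMonoid M] {v : ℕ → M} {m : ℕ} {S : M}
    (hv : ∀ n, v (n + m) = v n + S) (n k : ℕ) : v (n + k * m) = v n + k • S := by
  induction k with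
  | zero => simp
  | succ k ih => rw [Nat.succ_mul, ← add_assoc, hv, ih, succ_nsmul, add_assoc]

theorem eq_zero_of_exists_forall_norm_le_of_map_add {E : Type*} [NormedAddCommGroup E]
    [NormedSpace ℝ E] {v : ℕ → E} {m : ℕ} {S : E} (hv : ∀ n, v (n + m) = v n + S)
    (hB : ∃ B : ℝ, ∀ n, ‖v n‖ ≤ B) : S = 0 := by
  obtain ⟨B, hB⟩ := hB
  have hle : ∀ k : ℕ, k * ‖S‖ ≤ B + ‖v 0‖ := fun k => by
    have hk := map_add_mul_of_map_add hv 0 k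
    calc (k : ℝ) * ‖S‖ = ‖v (0 + k * m) - v 0‖ := by
          rw [hk, add_sub_cancel_left, RCLike.norm_nsmul ℝ, nsmul_eq_mul]
      _ ≤ B + ‖v 0‖ := (norm_sub_le _ _).trans (by gcongr; exact hB _)
  by_contra hS
  obtain ⟨k, hk⟩ := exists_nat_gt ((B + ‖v 0‖) / ‖S‖)
  rw [div_lt_iff₀ (norm_pos_iff.mpr hS)] at hk
  exact (hle k).not_gt hk

theorem exists_forall_norm_le_iff_of_map_add {E : Type*} [NormedAddCommGroup E]
    [NormedSpace ℝ E] {v : ℕ → E} {m : ℕ} {S : E} (hm : m ≠ 0)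
    (hv : ∀ n, v (n + m) = v n + S) : (∃ B : ℝ, ∀ n, ‖v n‖ ≤ B) ↔ S = 0 := by
  refine ⟨eq_zero_of_exists_forall_norm_le_of_map_add hv, fun hS => ?_⟩
  refine Function.Periodic.exists_forall_norm_le (fun n => ?_) hm
  rw [hv, hS, add_zero]

/-- For a walk `⟨f⟩_m` with unit edge lengths and `f(n + m) ≡ f(n) (mod m)` for all
`n ≥ 1`, the walk is bounded iff `∑_{t=1}^{m} exp(2πi·f(t)/m) = 0`, and in that case
it is closed: `v(n + m) = v(n)` for all `n`. -/
theorem stmt_6 (f : ℕ → ℕ) (m : ℕ) (hm : 1 ≤ m)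
    (hf : ∀ n, 1 ≤ n → f (n + m) % m = f n % m) (v : ℕ → ℂ)
    (hv : ∀ n, v n = ∑ t ∈ Finset.Icc 1 n,
      Complex.exp (2 * (Real.pi : ℂ) * Complex.I * (f t : ℂ) / (m : ℂ))) :
    ((∃ B : ℝ, ∀ n, ‖v n‖ ≤ B) ↔
      (∑ t ∈ Finset.Icc 1 m,
        Complex.exp (2 * (Real.pi : ℂ) * Complex.I * (f t : ℂ) / (m : ℂ))) = 0) ∧
    ((∑ t ∈ Finset.Icc 1 m,
        Complex.exp (2 * (Real.pi : ℂ) * Complex.I * (f t : ℂ) / (m : ℂ))) = 0 →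
      ∀ n, v (n + m) = v n) := by
  have hshift : ∀ n, v (n + m) = v n + v m := fun n => by
    simp only [hv]
    exact sum_Icc_one_add_period
      (fun t ht => exp_two_pi_mul_I_mul_natCast_div_eq_of_mod_eq (hf t ht)) n
  rw [← hv m]
  refine ⟨exists_forall_norm_le_iff_of_map_add (by omega) hshift, fun h n => ?_⟩
  rw [hshift, h, add_zero]
end

section
/- For every integer m ≥ 1, the walk ⟨n²⟩_m (f(n) = n², g ≡ 1), with vertices v(n) = ∑_{t=1}^n exp(2·π·I·t²/m), is bounded if and only if m ≡ 2 (mod 4); equivalently, v(n + m) = v(n) holds for all n if and only if m ≡ 2 (mod 4). -/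
/-!
Let `G = ∑_{x mod m} e(x²/m)` be the quadratic Gauss sum. The steps of the walk are `m`-periodic,
so `v (n + m) = v n + G`: the walk is `m`-periodic, and bounded, exactly when `G = 0`, and
otherwise `v (k * m) = k • G` is unbounded. Substituting `y = x + h` in
`|G|² = ∑_{x, y} e((y² - x²)/m)` and summing over `x` leaves `m * ∑_{2h = 0} e(h²/m)`, which is `m`
for odd `m` and `m * (1 + (-1) ^ (m / 2))` for even `m`; so `G = 0` iff `m ≡ 2 (mod 4)`.
-/

open Complex Finset

section PeriodicPartialSums

variable {m : ℕ} [NeZero m] {M : Type*} [AddCommMonoid M]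
  {E : Type*} [NormedAddCommGroup E] [NormedSpace ℝ E]

theorem ZMod.sum_range_natCast (f : ZMod m → M) :
    ∑ t ∈ range m, f t = ∑ x, f x :=
  sum_nbij' (↑) ZMod.val (by simp) (fun x _ => by simpa using ZMod.val_lt x)
    (fun t ht => ZMod.val_cast_of_lt (by simpa using ht)) (fun x _ => ZMod.natCast_zmod_val x)
    (fun _ _ => rfl)

theorem ZMod.sum_range_natCast_add (f : ZMod m → M) (n : ℕ) :
    ∑ t ∈ range m, f ↑(n + t) = ∑ x, f x := by
  simp only [Nat.cast_add]
  rw [ZMod.sum_range_natCast fun x => f ((n : ZMod m) + x)]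
  exact Fintype.sum_equiv (Equiv.addLeft _) _ _ fun _ => rfl

theorem ZMod.sum_range_add_period (f : ZMod m → M) (n : ℕ) :
    ∑ t ∈ range (n + m), f t = ∑ t ∈ range n, f t + ∑ x, f x := by
  rw [sum_range_add, ZMod.sum_range_natCast_add]

theorem ZMod.sum_range_add_mul_period (f : ZMod m → M) (n k : ℕ) :
    ∑ t ∈ range (n + k * m), f t = ∑ t ∈ range n, f t + k • ∑ x, f x := by
  induction k with
  | zero => simp
  | succ k ih =>
    rw [add_mul, one_mul, ← add_assoc, ZMod.sum_range_add_period, ih, succ_nsmul, add_assoc]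

theorem ZMod.exists_norm_sum_range_le_iff (f : ZMod m → E) :
    (∃ B : ℝ, ∀ n, ‖∑ t ∈ range n, f t‖ ≤ B) ↔ ∑ x, f x = 0 := by
  have hmul (k : ℕ) : ∑ t ∈ range (k * m), f t = k • ∑ x, f x := by
    simpa using ZMod.sum_range_add_mul_period f 0 k
  constructor
  · rintro ⟨B, hB⟩
    by_contra hG
    obtain ⟨k, hk⟩ := exists_nat_gt (B / ‖∑ x, f x‖)
    have hle := hB (k * m)
    rw [hmul, RCLike.norm_nsmul ℝ, nsmul_eq_mul] at hle
    rw [div_lt_iff₀ (norm_pos_iff.2 hG)] at hk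
    linarith
  · intro hG
    refine ⟨∑ x, ‖f x‖, fun n => ?_⟩
    rw [← Nat.mod_add_div' n m, ZMod.sum_range_add_mul_period, hG, smul_zero, add_zero,
      ← ZMod.sum_range_natCast]
    calc ‖∑ t ∈ range (n % m), f t‖ ≤ ∑ t ∈ range (n % m), ‖f t‖ := norm_sum_le _ _
      _ ≤ ∑ t ∈ range m, ‖f t‖ :=
        sum_le_sum_of_subset_of_nonneg (range_subset_range.2 (Nat.mod_lt _ (NeZero.pos m)).le)
          fun _ _ _ => norm_nonneg _

end PeriodicPartialSums

theorem AddChar.norm_sum_apply_sq_sq {R : Type*} [CommRing R] [Fintype R] [DecidableEq R]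
    {ψ : AddChar R ℂ} (hψ : ψ.IsPrimitive) :
    (‖∑ x, ψ (x ^ 2)‖ ^ 2 : ℂ) = Fintype.card R * ∑ h with 2 * h = 0, ψ (h ^ 2) := by
  calc (‖∑ x, ψ (x ^ 2)‖ ^ 2 : ℂ)
      = ∑ x, ∑ y, ψ (y ^ 2 - x ^ 2) := by
        simp only [← conj_mul', map_sum, sum_mul_sum, sub_eq_add_neg, AddChar.map_add_eq_mul,
          AddChar.map_neg_eq_conj, mul_comm]
        exact sum_comm
    _ = ∑ x, ∑ h, ψ ((x + h) ^ 2 - x ^ 2) :=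
        sum_congr rfl fun x _ => (Fintype.sum_equiv (Equiv.addLeft x) _ _ fun _ => rfl).symm
    _ = ∑ h, ψ (h ^ 2) * ∑ x, ψ (x * (2 * h)) := by
        rw [sum_comm]
        refine sum_congr rfl fun h _ => ?_
        rw [mul_sum]
        refine sum_congr rfl fun x _ => ?_
        rw [← AddChar.map_add_eq_mul]
        ring_nf
    _ = Fintype.card R * ∑ h with 2 * h = 0, ψ (h ^ 2) := by
        simp only [AddChar.sum_mulShift _ hψ, sum_filter, mul_sum, Nat.cast_ite, Nat.cast_zero,
          mul_ite, ite_mul, mul_zero, zero_mul, mul_comm]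

theorem ZMod.filter_two_mul_eq_zero_of_odd {m : ℕ} [NeZero m] (hm : Odd m) :
    ({h | 2 * h = 0} : Finset (ZMod m)) = {0} := by
  have h2 : IsUnit (2 : ZMod m) := by
    simpa using (ZMod.unitOfCoprime 2 (Nat.coprime_two_left.2 hm)).isUnit
  ext h
  simp [h2.mul_right_eq_zero]

theorem ZMod.filter_two_mul_eq_zero_two_mul {k : ℕ} [NeZero k] :
    ({h | 2 * h = 0} : Finset (ZMod (2 * k))) = {0, (k : ZMod (2 * k))} := by
  ext h
  obtain ⟨j, hj, rfl⟩ : ∃ j < 2 * k, (j : ZMod (2 * k)) = h :=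
    ⟨h.val, ZMod.val_lt h, ZMod.natCast_zmod_val h⟩
  have hkj : 2 * k ∣ 2 * j ↔ j = 0 ∨ j = k := by
    rw [Nat.mul_dvd_mul_iff_left two_pos]
    constructor
    · rintro ⟨c, rfl⟩
      have : c < 2 := by nlinarith
      interval_cases c <;> simp
    · rintro (rfl | rfl) <;> simp
  have hzero : 2 * k ∣ j ↔ j = 0 :=
    ⟨(Nat.eq_zero_of_dvd_of_lt · hj), by rintro rfl; exact dvd_zero _⟩
  simp only [mem_filter, mem_univ, true_and, mem_insert, mem_singleton]
  rw [show (2 : ZMod (2 * k)) * j = (2 * j : ℕ) by push_cast; rfl, ZMod.natCast_eq_zero_iff, hkj,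
    ZMod.natCast_eq_zero_iff, hzero, ZMod.natCast_eq_natCast_iff', Nat.mod_eq_of_lt hj,
    Nat.mod_eq_of_lt (by omega : k < 2 * k)]

theorem ZMod.stdAddChar_natCast_sq_two_mul (k : ℕ) [NeZero k] :
    ZMod.stdAddChar ((k : ZMod (2 * k)) ^ 2) = (-1) ^ k := by
  have hk : (k : ℂ) ≠ 0 := NeZero.ne _
  rw [← Nat.cast_pow, ZMod.stdAddChar_apply, ZMod.toCircle_natCast, ← exp_pi_mul_I,
    ← exp_nat_mul]
  congr 1
  push_cast
  field_simp

theorem ZMod.sum_stdAddChar_sq_eq_zero_iff {m : ℕ} [NeZero m] :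
    ∑ x : ZMod m, ZMod.stdAddChar (x ^ 2) = 0 ↔ m % 4 = 2 := by
  rw [← norm_eq_zero, ← sq_eq_zero_iff (M₀ := ℝ), ← ofReal_eq_zero, ofReal_pow,
    AddChar.norm_sum_apply_sq_sq (ZMod.isPrimitive_stdAddChar m), ZMod.card,
    mul_eq_zero, Nat.cast_eq_zero, or_iff_right (NeZero.ne m)]
  rcases Nat.even_or_odd' m with ⟨k, rfl | rfl⟩
  · have : NeZero k := ⟨right_ne_zero_of_mul (NeZero.ne (2 * k))⟩
    rw [ZMod.filter_two_mul_eq_zero_two_mul, sum_pair, zero_pow two_ne_zero,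
      AddChar.map_zero_eq_one, ZMod.stdAddChar_natCast_sq_two_mul, add_eq_zero_iff_eq_neg',
      neg_one_pow_eq_neg_one_iff_odd, Nat.odd_iff]
    · omega
    · norm_num
    · rw [ne_comm, ne_eq, ZMod.natCast_eq_zero_iff]
      exact Nat.not_dvd_of_pos_of_lt (NeZero.pos k) (by have := NeZero.pos k; omega)
  · rw [ZMod.filter_two_mul_eq_zero_of_odd (odd_two_mul_add_one k), sum_singleton,
      zero_pow two_ne_zero, AddChar.map_zero_eq_one]
    exact iff_of_false one_ne_zero (by omega)

/-- For every `m ≥ 1`, the walk `⟨n²⟩_m` is bounded iff `m ≡ 2 (mod 4)`;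
equivalently, `v(n + m) = v(n)` for all `n` iff `m ≡ 2 (mod 4)`. -/
theorem stmt_12 (m : ℕ) (hm : 1 ≤ m) (v : ℕ → ℂ)
    (hv : ∀ n, v n = ∑ t ∈ Finset.Icc 1 n,
      Complex.exp (2 * (Real.pi : ℂ) * Complex.I * (t : ℂ) ^ 2 / (m : ℂ))) :
    ((∃ B : ℝ, ∀ n, ‖v n‖ ≤ B) ↔ m % 4 = 2) ∧
    ((∀ n, v (n + m) = v n) ↔ m % 4 = 2) := by
  have : NeZero m := ⟨by omega⟩
  let f : ZMod m → ℂ := fun x => ZMod.stdAddChar ((x + 1) ^ 2)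
  have hvf (n : ℕ) : v n = ∑ t ∈ range n, f t := by
    rw [hv, ← Ico_add_one_right_eq_Icc, sum_Ico_eq_sum_range, Nat.add_sub_cancel]
    refine sum_congr rfl fun t _ => ?_
    rw [add_comm 1 t]
    simp only [f, ← Nat.cast_succ, ← Nat.cast_pow, ZMod.stdAddChar_apply, ZMod.toCircle_natCast]
  have hf : ∑ x, f x = ∑ x : ZMod m, ZMod.stdAddChar (x ^ 2) :=
    Fintype.sum_equiv (Equiv.addRight 1) _ _ fun _ => rfl
  simp only [hvf, ZMod.exists_norm_sum_range_le_iff, ZMod.sum_range_add_period, add_eq_left,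
    forall_const, hf, ZMod.sum_stdAddChar_sq_eq_zero_iff, and_self]
end
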